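/- arXiv:2302.03358 — 3 statements merged into one kernel-verified Lean document; each statement's English description precedes it below -/
import Mathlib

section
/- (Lemma 1 of the paper.) Let f : ℝⁿ → ℝⁿ be Lipschitz continuous with constant L_f ≥ 0, let T > 0, and let u, v : [0, T] → ℝⁿ be two solutions of the autonomous ODE x' = f(x) on [0, T]. For a solution w and Δ ∈ (0, T], define the time-averaged increment φ_w(Δ) := (w(Δ) − w(0))/Δ. Then for every Δ ∈ (0, T], ‖φ_u(Δ) − φ_v(Δ)‖₂ ≤ ((exp(L_f · Δ) − 1)/Δ) · ‖u(0) − v(0)‖₂. -/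
/-- Lemma 1: for two solutions `u, v` of `x' = f(x)` on `[0, T]` with `f`
Lipschitz with constant `L_f ≥ 0`, the time-averaged increments
`φ_w(Δ) = (w Δ - w 0)/Δ` satisfy
`‖φ_u(Δ) - φ_v(Δ)‖ ≤ ((exp (L_f Δ) - 1)/Δ) ‖u 0 - v 0‖` for all `Δ ∈ (0, T]`. -/
theorem stmt_1 {n : ℕ} (f : EuclideanSpace ℝ (Fin n) → EuclideanSpace ℝ (Fin n))
    (Lf T : ℝ) (hLf : 0 ≤ Lf) (hT : 0 < T)
    (hf : ∀ x y, ‖f x - f y‖ ≤ Lf * ‖x - y‖)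
    (u v : ℝ → EuclideanSpace ℝ (Fin n))
    (hu : ∀ t ∈ Set.Icc (0 : ℝ) T, HasDerivAt u (f (u t)) t)
    (hv : ∀ t ∈ Set.Icc (0 : ℝ) T, HasDerivAt v (f (v t)) t) :
    ∀ Δ ∈ Set.Ioc (0 : ℝ) T,
      ‖Δ⁻¹ • (u Δ - u 0) - Δ⁻¹ • (v Δ - v 0)‖ ≤
        ((Real.exp (Lf * Δ) - 1) / Δ) * ‖u 0 - v 0‖ := by
  intro Δ hΔ
  obtain ⟨hΔ0, hΔT⟩ := hΔ
  set g : ℝ → EuclideanSpace ℝ (Fin n) := fun t => (u t - v t) - (u 0 - v 0) with hg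
  set ε : ℝ := Lf * ‖u 0 - v 0‖ with hε
  have hsub : Set.Icc (0:ℝ) Δ ⊆ Set.Icc 0 T := Set.Icc_subset_Icc le_rfl hΔT
  have hderiv : ∀ t ∈ Set.Icc (0:ℝ) Δ, HasDerivAt g (f (u t) - f (v t)) t := by
    intro t ht
    exact ((hu t (hsub ht)).sub (hv t (hsub ht))).sub_const _
  have key : ∀ x ∈ Set.Icc (0:ℝ) Δ, ‖g x‖ ≤ gronwallBound 0 Lf ε (x - 0) := by
    apply norm_le_gronwallBound_of_norm_deriv_right_le
    · exact fun t ht => (hderiv t ht).continuousAt.continuousWithinAt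
    · exact fun t ht => (hderiv t (Set.Ico_subset_Icc_self ht)).hasDerivWithinAt
    · simp [hg]
    · intro t ht
      calc ‖f (u t) - f (v t)‖ ≤ Lf * ‖u t - v t‖ := hf _ _
        _ ≤ Lf * (‖g t‖ + ‖u 0 - v 0‖) := by
            apply mul_le_mul_of_nonneg_left _ hLf
            calc ‖u t - v t‖ = ‖g t + (u 0 - v 0)‖ := by simp [hg]
              _ ≤ ‖g t‖ + ‖u 0 - v 0‖ := norm_add_le _ _
        _ = Lf * ‖g t‖ + ε := by ring
  have hgΔ : ‖g Δ‖ ≤ (Real.exp (Lf * Δ) - 1) * ‖u 0 - v 0‖ := by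
    have := key Δ ⟨le_of_lt hΔ0, le_rfl⟩
    rcases eq_or_lt_of_le hLf with h0 | hpos
    · rw [← h0] at this ⊢
      simp only [hε, ← h0, zero_mul, gronwallBound_K0] at this
      simpa using this
    · rw [gronwallBound_of_K_ne_0 (ne_of_gt hpos)] at this
      simp only [zero_mul, zero_add, sub_zero] at this
      calc ‖g Δ‖ ≤ ε / Lf * (Real.exp (Lf * Δ) - 1) := this
        _ = (Real.exp (Lf * Δ) - 1) * ‖u 0 - v 0‖ := by
            field_simp [hε]; ring
  have hrw : Δ⁻¹ • (u Δ - u 0) - Δ⁻¹ • (v Δ - v 0) = Δ⁻¹ • g Δ := by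
    simp only [hg, smul_sub]
    abel
  rw [hrw, norm_smul, norm_inv, Real.norm_of_nonneg (le_of_lt hΔ0), div_mul_eq_mul_div,
    mul_div_assoc, div_eq_inv_mul, ← mul_assoc, mul_comm _ Δ⁻¹, mul_assoc]
  exact mul_le_mul_of_nonneg_left hgΔ (inv_nonneg.mpr (le_of_lt hΔ0))
end

section
/- (The paper's error-estimate theorem, variable time steps.) Let f : ℝⁿ → ℝⁿ be Lipschitz continuous with constant L_f ≥ 0, let t_0 < t_1 < ⋯ < t_m be time instances with stepsizes Δ_j := t_{j+1} − t_j > 0, and let u : [t_0, t_m] → ℝⁿ be a solution of the autonomous ODE x' = f(x) on [t_0, t_m]. Define predicted states by p_0 := u(t_0) and p_{j+1} := p_j + Δ_j · N_j for j = 0, …, m−1, where each N_j ∈ ℝⁿ is an approximate increment. Suppose that for each j there is a solution w_j : [0, Δ_j] → ℝⁿ of the same ODE with w_j(0) = p_j, and that ‖N_j − (w_j(Δ_j) − p_j)/Δ_j‖₂ ≤ E for some fixed E ≥ 0. Then for every j with 1 ≤ j ≤ m, ‖p_j − u(t_j)‖₂ ≤ E · Σ_{s=0}^{j−1} Δ_s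 · exp(L_f · (t_j − t_{s+1})). -/
/-! Over one step the error `p_{j+1} - u(t_{j+1})` splits as
`Δ_j • (N_j - Δ_j⁻¹ • (w_j(Δ_j) - p_j)) + (w_j(Δ_j) - u(t_{j+1}))`. The first term is at most
`Δ_j E`. The second compares two trajectories of `x' = f(x)` that start `‖p_j - u(t_j)‖` apart,
so Grönwall's inequality bounds it by `‖p_j - u(t_j)‖ exp(L_f Δ_j)`. Unrolling this recursion
from `p_0 = u(t_0)` gives the sum. -/

open Real Set Finset
open scoped NNReal

lemma le_of_forall_le_succ_of_le {α : Type*} [Preorder α] {t : ℕ → α} {m : ℕ}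
    (ht : ∀ j < m, t j ≤ t (j + 1)) {i j : ℕ} (hij : i ≤ j) (hjm : j ≤ m) : t i ≤ t j := by
  induction hij with
  | refl => exact le_rfl
  | step _ ih => exact (ih (by omega)).trans (ht _ (by omega))

lemma le_mul_sum_exp_of_le_step {e t : ℕ → ℝ} {L E : ℝ} {m : ℕ} (h0 : e 0 ≤ 0)
    (hstep : ∀ j < m,
      e (j + 1) ≤ (t (j + 1) - t j) * E + e j * exp (L * (t (j + 1) - t j))) :
    ∀ j ≤ m, e j ≤ E * ∑ s ∈ range j, (t (s + 1) - t s) * exp (L * (t j - t (s + 1))) := by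
  intro j hjm
  induction j with
  | zero => simpa using h0
  | succ j ih =>
    have hexp_split : ∀ s, exp (L * (t (j + 1) - t (s + 1))) =
        exp (L * (t j - t (s + 1))) * exp (L * (t (j + 1) - t j)) := fun s => by
      rw [← exp_add]; ring_nf
    calc e (j + 1)
        ≤ (t (j + 1) - t j) * E + e j * exp (L * (t (j + 1) - t j)) := hstep j hjm
      _ ≤ (t (j + 1) - t j) * E + (E * ∑ s ∈ range j,
            (t (s + 1) - t s) * exp (L * (t j - t (s + 1)))) * exp (L * (t (j + 1) - t j)) := by
          gcongr; exact ih (by omega)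
      _ = E * ∑ s ∈ range (j + 1),
            (t (s + 1) - t s) * exp (L * (t (j + 1) - t (s + 1))) := by
          simp_rw [sum_range_succ, sub_self, mul_zero, exp_zero, hexp_split, ← mul_assoc,
            ← sum_mul]
          ring

section Autonomous

variable {F : Type*} [NormedAddCommGroup F] [NormedSpace ℝ F] {f : F → F} {K : ℝ≥0}

lemma dist_le_mul_exp_of_hasDerivAt_of_lipschitzWith (hf : LipschitzWith K f)
    {w v : ℝ → F} {a b : ℝ} (hab : a ≤ b)
    (hw : ∀ s ∈ Icc a b, HasDerivAt w (f (w s)) s)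
    (hv : ∀ s ∈ Icc a b, HasDerivAt v (f (v s)) s) :
    dist (w b) (v b) ≤ dist (w a) (v a) * exp (K * (b - a)) :=
  dist_le_of_trajectories_ODE (v := fun _ => f) (fun _ => hf)
    (fun s hs => (hw s hs).continuousAt.continuousWithinAt)
    (fun s hs => (hw s (Ico_subset_Icc_self hs)).hasDerivWithinAt)
    (fun s hs => (hv s hs).continuousAt.continuousWithinAt)
    (fun s hs => (hv s (Ico_subset_Icc_self hs)).hasDerivWithinAt)
    le_rfl b ⟨hab, le_rfl⟩

lemma norm_add_smul_sub_le_of_hasDerivAt (hf : LipschitzWith K f)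
    {u w : ℝ → F} {a b : ℝ} (hab : a < b)
    (hu : ∀ s ∈ Icc a b, HasDerivAt u (f (u s)) s)
    (hw : ∀ s ∈ Icc 0 (b - a), HasDerivAt w (f (w s)) s) {x : F} (hw0 : w 0 = x) (N : F) :
    ‖x + (b - a) • N - u b‖ ≤
      (b - a) * ‖N - (b - a)⁻¹ • (w (b - a) - x)‖ + ‖x - u a‖ * exp (K * (b - a)) := by
  have hΔ : 0 < b - a := sub_pos.2 hab
  have hu_shift : ∀ s ∈ Icc 0 (b - a), HasDerivAt (fun s => u (a + s)) (f (u (a + s))) s :=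
    fun s hs => (hu (a + s) ⟨by linarith [hs.1], by linarith [hs.2]⟩).comp_const_add a s
  have htraj : ‖w (b - a) - u b‖ ≤ ‖x - u a‖ * exp (K * (b - a)) := by
    simpa [dist_eq_norm, hw0] using
      dist_le_mul_exp_of_hasDerivAt_of_lipschitzWith hf hΔ.le hw hu_shift
  have hsplit : x + (b - a) • N - u b =
      (b - a) • (N - (b - a)⁻¹ • (w (b - a) - x)) + (w (b - a) - u b) := by
    rw [smul_sub (b - a) N, smul_inv_smul₀ hΔ.ne']
    abel
  calc ‖x + (b - a) • N - u b‖
      ≤ ‖(b - a) • (N - (b - a)⁻¹ • (w (b - a) - x))‖ + ‖w (b - a) - u b‖ := by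
        rw [hsplit]; exact norm_add_le _ _
    _ ≤ (b - a) * ‖N - (b - a)⁻¹ • (w (b - a) - x)‖ + ‖x - u a‖ * exp (K * (b - a)) := by
        rw [norm_smul, Real.norm_of_nonneg hΔ.le]
        gcongr

end Autonomous

theorem stmt_3_general {n : ℕ} (f : EuclideanSpace ℝ (Fin n) → EuclideanSpace ℝ (Fin n))
    (Lf E : ℝ) (hLf : 0 ≤ Lf)
    (hf : ∀ x y, ‖f x - f y‖ ≤ Lf * ‖x - y‖)
    (m : ℕ) (t : ℕ → ℝ) (ht : ∀ j < m, t j < t (j + 1))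
    (u : ℝ → EuclideanSpace ℝ (Fin n))
    (hu : ∀ s ∈ Set.Icc (t 0) (t m), HasDerivAt u (f (u s)) s)
    (N : ℕ → EuclideanSpace ℝ (Fin n)) (p : ℕ → EuclideanSpace ℝ (Fin n))
    (hp0 : p 0 = u (t 0))
    (hpstep : ∀ j < m, p (j + 1) = p j + (t (j + 1) - t j) • N j)
    (w : ℕ → ℝ → EuclideanSpace ℝ (Fin n))
    (hw : ∀ j < m, ∀ s ∈ Set.Icc (0 : ℝ) (t (j + 1) - t j),
      HasDerivAt (w j) (f (w j s)) s)
    (hw0 : ∀ j < m, w j 0 = p j)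
    (hN : ∀ j < m,
      ‖N j - (t (j + 1) - t j)⁻¹ • (w j (t (j + 1) - t j) - p j)‖ ≤ E) :
    ∀ j, 1 ≤ j → j ≤ m →
      ‖p j - u (t j)‖ ≤
        E * ∑ s ∈ Finset.range j,
          (t (s + 1) - t s) * Real.exp (Lf * (t j - t (s + 1))) := by
  lift Lf to ℝ≥0 using hLf
  have hlip : LipschitzWith Lf f :=
    LipschitzWith.of_dist_le_mul fun x y => by rw [dist_eq_norm, dist_eq_norm]; exact hf x y
  have ht_mono : ∀ {i j}, i ≤ j → j ≤ m → t i ≤ t j :=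
    le_of_forall_le_succ_of_le fun j hj => (ht j hj).le
  have hstep : ∀ j < m, ‖p (j + 1) - u (t (j + 1))‖ ≤
      (t (j + 1) - t j) * E + ‖p j - u (t j)‖ * exp (Lf * (t (j + 1) - t j)) := by
    intro j hj
    have hsub : Icc (t j) (t (j + 1)) ⊆ Icc (t 0) (t m) :=
      Icc_subset_Icc (ht_mono (Nat.zero_le j) hj.le) (ht_mono hj le_rfl)
    rw [hpstep j hj]
    refine (norm_add_smul_sub_le_of_hasDerivAt hlip (ht j hj) (fun s hs => hu s (hsub hs))
      (hw j hj) (hw0 j hj) (N j)).trans ?_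
    have hΔ : 0 ≤ t (j + 1) - t j := (sub_pos.2 (ht j hj)).le
    gcongr
    exact hN j hj
  intro j _ hjm
  exact le_mul_sum_exp_of_le_step (e := fun j => ‖p j - u (t j)‖) (by simp [hp0]) hstep j hjm

/-- error-estimate theorem, variable time steps: with time instances
`t 0 < t 1 < ⋯ < t m`, true solution `u` on `[t 0, t m]`, predicted states
`p 0 = u (t 0)`, `p (j+1) = p j + Δ_j • N j`, and learned increments `N j` within `E` of
the exact time-averaged increments at the predicted states, one has
`‖p j - u (t j)‖ ≤ E ∑_{s<j} Δ_s exp (L_f (t j - t (s+1)))` for `1 ≤ j ≤ m`. -/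
theorem stmt_3 {n : ℕ} (f : EuclideanSpace ℝ (Fin n) → EuclideanSpace ℝ (Fin n))
    (Lf E : ℝ) (hLf : 0 ≤ Lf) (hE : 0 ≤ E)
    (hf : ∀ x y, ‖f x - f y‖ ≤ Lf * ‖x - y‖)
    (m : ℕ) (t : ℕ → ℝ) (ht : ∀ j < m, t j < t (j + 1))
    (u : ℝ → EuclideanSpace ℝ (Fin n))
    (hu : ∀ s ∈ Set.Icc (t 0) (t m), HasDerivAt u (f (u s)) s)
    (N : ℕ → EuclideanSpace ℝ (Fin n)) (p : ℕ → EuclideanSpace ℝ (Fin n))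
    (hp0 : p 0 = u (t 0))
    (hpstep : ∀ j < m, p (j + 1) = p j + (t (j + 1) - t j) • N j)
    (w : ℕ → ℝ → EuclideanSpace ℝ (Fin n))
    (hw : ∀ j < m, ∀ s ∈ Set.Icc (0 : ℝ) (t (j + 1) - t j),
      HasDerivAt (w j) (f (w j s)) s)
    (hw0 : ∀ j < m, w j 0 = p j)
    (hN : ∀ j < m,
      ‖N j - (t (j + 1) - t j)⁻¹ • (w j (t (j + 1) - t j) - p j)‖ ≤ E) :
    ∀ j, 1 ≤ j → j ≤ m →
      ‖p j - u (t j)‖ ≤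
        E * ∑ s ∈ Finset.range j,
          (t (s + 1) - t s) * Real.exp (Lf * (t j - t (s + 1))) :=
  stmt_3_general f Lf E hLf hf m t ht u hu N p hp0 hpstep w hw hw0 hN
end

section
/- (Constant-stepsize case of the paper's error-estimate theorem.) Let f : ℝⁿ → ℝⁿ be Lipschitz continuous with constant L_f > 0, let Δ > 0, set t_j := t_0 + j·Δ, and let u : [t_0, t_m] → ℝⁿ be a solution of the autonomous ODE x' = f(x) on [t_0, t_m]. Define predicted states by p_0 := u(t_0) and p_{j+1} := p_j + Δ · N_j for j = 0, …, m−1. Suppose that for each j there is a solution w_j : [0, Δ] → ℝⁿ of the same ODE with w_j(0) = p_j, and that ‖N_j − (w_j(Δ) − p_j)/Δ‖₂ ≤ E for some fixed E ≥ 0. Then for every j with 1 ≤ j ≤ m, ‖p_j − u(t_j)‖₂ ≤ E · Δ · (exp(L_f · j · Δ) − 1)/(exp(L_f · Δ) − 1). -/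
/-!
Since `f` is Lipschitz, Grönwall's inequality shows that two solutions of `x' = f x` drift apart
by at most a factor `exp (L_f Δ)` over one step. Comparing `p (j+1)` with the exact solution `w j`
started at `p j` therefore gives, for `e j = ‖p j - u t_j‖`, the recursion
`e (j+1) ≤ exp (L_f Δ) * e j + Δ E`, and `e 0 = 0` turns it into the geometric sum
`Δ E ∑_{i<j} exp (L_f Δ)^i`.
-/

open Set Finset Real
open scoped NNReal

theorem le_pow_mul_add_mul_geom_sum {e : ℕ → ℝ} {a b : ℝ} (ha : 0 ≤ a) {m : ℕ}
    (h : ∀ j < m, e (j + 1) ≤ a * e j + b) :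
    ∀ j ≤ m, e j ≤ a ^ j * e 0 + b * ∑ i ∈ range j, a ^ i := by
  intro j
  induction j with
  | zero => simp
  | succ j ih =>
    intro hjm
    calc e (j + 1) ≤ a * e j + b := h j hjm
      _ ≤ a * (a ^ j * e 0 + b * ∑ i ∈ range j, a ^ i) + b := by
        gcongr
        exact ih (Nat.le_of_succ_le hjm)
      _ = a ^ (j + 1) * e 0 + b * ∑ i ∈ range (j + 1), a ^ i := by
        rw [geom_sum_succ]; ring

section

variable {E : Type*} [NormedAddCommGroup E] [NormedSpace ℝ E]

theorem dist_le_dist_mul_exp_of_hasDerivAt {f : E → E} {K : ℝ≥0} (hf : LipschitzWith K f)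
    {v w : ℝ → E} {a b : ℝ} (hab : a ≤ b)
    (hv : ∀ s ∈ Icc a b, HasDerivAt v (f (v s)) s)
    (hw : ∀ s ∈ Icc a b, HasDerivAt w (f (w s)) s) :
    dist (v b) (w b) ≤ dist (v a) (w a) * exp (K * (b - a)) :=
  dist_le_of_trajectories_ODE (v := fun _ => f) (fun _ => hf)
    (fun s hs => (hv s hs).continuousAt.continuousWithinAt)
    (fun s hs => (hv s (Ico_subset_Icc_self hs)).hasDerivWithinAt)
    (fun s hs => (hw s hs).continuousAt.continuousWithinAt)
    (fun s hs => (hw s (Ico_subset_Icc_self hs)).hasDerivWithinAt)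
    le_rfl b ⟨hab, le_rfl⟩

theorem norm_add_smul_sub_le {Δ ε : ℝ} (hΔ : 0 < Δ) {p q y v : E}
    (hv : ‖v - Δ⁻¹ • (q - p)‖ ≤ ε) :
    ‖p + Δ • v - y‖ ≤ ‖q - y‖ + Δ * ε := by
  have hsplit : p + Δ • v - y = (q - y) + Δ • (v - Δ⁻¹ • (q - p)) := by
    rw [smul_sub, smul_inv_smul₀ hΔ.ne']
    abel
  calc ‖p + Δ • v - y‖ ≤ ‖q - y‖ + ‖Δ • (v - Δ⁻¹ • (q - p))‖ :=
      hsplit ▸ norm_add_le _ _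
    _ ≤ ‖q - y‖ + Δ * ε := by
      rw [norm_smul, Real.norm_of_nonneg hΔ.le]
      gcongr

theorem norm_predictor_step_sub_le {f : E → E} {K : ℝ≥0} (hf : LipschitzWith K f)
    {Δ ε c : ℝ} (hΔ : 0 < Δ) {u w : ℝ → E} {p v : E}
    (hu : ∀ s ∈ Icc c (c + Δ), HasDerivAt u (f (u s)) s)
    (hw : ∀ s ∈ Icc 0 Δ, HasDerivAt w (f (w s)) s) (hw0 : w 0 = p)
    (hv : ‖v - Δ⁻¹ • (w Δ - p)‖ ≤ ε) :
    ‖p + Δ • v - u (c + Δ)‖ ≤ exp (K * Δ) * ‖p - u c‖ + Δ * ε := by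
  have hu_shift : ∀ s ∈ Icc 0 Δ, HasDerivAt (fun s => u (c + s)) (f (u (c + s))) s :=
    fun s hs => (hu (c + s) ⟨by linarith [hs.1], by linarith [hs.2]⟩).comp_const_add c s
  have hgronwall := dist_le_dist_mul_exp_of_hasDerivAt hf hΔ.le hw hu_shift
  rw [dist_eq_norm, dist_eq_norm, hw0, add_zero, sub_zero] at hgronwall
  calc ‖p + Δ • v - u (c + Δ)‖ ≤ ‖w Δ - u (c + Δ)‖ + Δ * ε :=
      norm_add_smul_sub_le hΔ hv
    _ ≤ exp (K * Δ) * ‖p - u c‖ + Δ * ε := by linarith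

end

theorem stmt_4_general {n : ℕ} (f : EuclideanSpace ℝ (Fin n) → EuclideanSpace ℝ (Fin n))
    (Lf Δ E t₀ : ℝ) (hLf : 0 < Lf) (hΔ : 0 < Δ)
    (hf : ∀ x y, ‖f x - f y‖ ≤ Lf * ‖x - y‖)
    (m : ℕ) (u : ℝ → EuclideanSpace ℝ (Fin n))
    (hu : ∀ s ∈ Set.Icc t₀ (t₀ + m * Δ), HasDerivAt u (f (u s)) s)
    (N : ℕ → EuclideanSpace ℝ (Fin n)) (p : ℕ → EuclideanSpace ℝ (Fin n))
    (hp0 : p 0 = u t₀)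
    (hpstep : ∀ j < m, p (j + 1) = p j + Δ • N j)
    (w : ℕ → ℝ → EuclideanSpace ℝ (Fin n))
    (hw : ∀ j < m, ∀ s ∈ Set.Icc (0 : ℝ) Δ, HasDerivAt (w j) (f (w j s)) s)
    (hw0 : ∀ j < m, w j 0 = p j)
    (hN : ∀ j < m, ‖N j - Δ⁻¹ • (w j Δ - p j)‖ ≤ E) :
    ∀ j, 1 ≤ j → j ≤ m →
      ‖p j - u (t₀ + j * Δ)‖ ≤
        E * Δ * (Real.exp (Lf * j * Δ) - 1) / (Real.exp (Lf * Δ) - 1) := by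
  have hLip : LipschitzWith Lf.toNNReal f := LipschitzWith.of_dist_le_mul fun x y => by
    simpa [dist_eq_norm, Real.coe_toNNReal _ hLf.le] using hf x y
  have hstep : ∀ j < m, ‖p (j + 1) - u (t₀ + ↑(j + 1) * Δ)‖ ≤
      exp (Lf * Δ) * ‖p j - u (t₀ + j * Δ)‖ + Δ * E := by
    intro j hj
    have hjm : (j + 1 : ℝ) ≤ m := by exact_mod_cast hj
    have hu_j : ∀ s ∈ Icc (t₀ + j * Δ) (t₀ + j * Δ + Δ), HasDerivAt u (f (u s)) s :=
      fun s hs => hu s ⟨by nlinarith [hs.1], by nlinarith [hs.2]⟩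
    have := norm_predictor_step_sub_le hLip hΔ hu_j (hw j hj) (hw0 j hj) (hN j hj)
    rw [Real.coe_toNNReal _ hLf.le] at this
    rwa [hpstep j hj, Nat.cast_succ, add_one_mul, ← add_assoc]
  have hexp_ne : exp (Lf * Δ) ≠ 1 := by
    rw [Ne, Real.exp_eq_one_iff]; positivity
  intro j _ hjm
  calc ‖p j - u (t₀ + j * Δ)‖
      ≤ exp (Lf * Δ) ^ j * ‖p 0 - u (t₀ + (0 : ℕ) * Δ)‖
          + Δ * E * ∑ i ∈ range j, exp (Lf * Δ) ^ i :=
        le_pow_mul_add_mul_geom_sum (e := fun j : ℕ => ‖p j - u (t₀ + j * Δ)‖)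
          (exp_pos _).le hstep j hjm
    _ = E * Δ * (exp (Lf * j * Δ) - 1) / (exp (Lf * Δ) - 1) := by
      rw [hp0, Nat.cast_zero, zero_mul, add_zero, sub_self, norm_zero, mul_zero, zero_add,
        geom_sum_eq hexp_ne, ← exp_nat_mul]
      ring_nf

/-- error-estimate theorem, constant stepsize `Δ`: with `t_j = t_0 + jΔ`,
prediction errors satisfy
`‖p j - u (t_0 + jΔ)‖ ≤ E Δ (exp (L_f j Δ) - 1)/(exp (L_f Δ) - 1)` for `1 ≤ j ≤ m`. -/
theorem stmt_4 {n : ℕ} (f : EuclideanSpace ℝ (Fin n) → EuclideanSpace ℝ (Fin n))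
    (Lf Δ E t₀ : ℝ) (hLf : 0 < Lf) (hΔ : 0 < Δ) (hE : 0 ≤ E)
    (hf : ∀ x y, ‖f x - f y‖ ≤ Lf * ‖x - y‖)
    (m : ℕ) (u : ℝ → EuclideanSpace ℝ (Fin n))
    (hu : ∀ s ∈ Set.Icc t₀ (t₀ + m * Δ), HasDerivAt u (f (u s)) s)
    (N : ℕ → EuclideanSpace ℝ (Fin n)) (p : ℕ → EuclideanSpace ℝ (Fin n))
    (hp0 : p 0 = u t₀)
    (hpstep : ∀ j < m, p (j + 1) = p j + Δ • N j)
    (w : ℕ → ℝ → EuclideanSpace ℝ (Fin n))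
    (hw : ∀ j < m, ∀ s ∈ Set.Icc (0 : ℝ) Δ, HasDerivAt (w j) (f (w j s)) s)
    (hw0 : ∀ j < m, w j 0 = p j)
    (hN : ∀ j < m, ‖N j - Δ⁻¹ • (w j Δ - p j)‖ ≤ E) :
    ∀ j, 1 ≤ j → j ≤ m →
      ‖p j - u (t₀ + j * Δ)‖ ≤
        E * Δ * (Real.exp (Lf * j * Δ) - 1) / (Real.exp (Lf * Δ) - 1) :=
  stmt_4_general f Lf Δ E t₀ hLf hΔ hf m u hu N p hp0 hpstep w hw hw0 hN
end
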